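/- arXiv:2005.13716 — 5 statements merged into one kernel-verified Lean document; each statement's English description precedes it below -/
import Mathlib

section
/- For the BlindOracle algorithm B and the offline optimal algorithm A for online caching with cache size k, there exists (for every input) a valid matching X_n between the final cache states such that ALG_B + Φ(n) ≤ OPT + M, where Φ(n) is the number of unmatched pages in B's final cache and M is the number of inversions; in particular ALG_B ≤ OPT + M. -/
/-!
A potential argument. Keep a valid matching `X` between the optimal cache and BlindOracle's
cache, with potential the number of unmatched requests in BlindOracle's cache. After request
`t`, keep the surviving pairs and match `t` with itself. A request of BlindOracle that loses
its partner is charged to the optimal algorithm: the partner was evicted, and not for free,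
since its page is next requested no earlier than that of the surviving request, which is
not the page requested at `t`.

When BlindOracle evicts `bs`, the potential must drop by one. This is automatic if `bs` was
unmatched or its partner left. Otherwise the partner `a` of `bs` stays, and counting (the
optimal cache holds `t` and at most `k - 1` older requests) gives a cached `b0` whose partner
left. If `y b0 ≤ y a`, rematch `a` with `b0`; if not, `y bs ≤ y a < y b0` while BlindOracle
predicted `h b0 ≤ h bs`, so `(bs, b0)` is an inversion, charged to the eviction of `bs`.
-/

/-- True next-arrival times: y t is the least t' > t with σ t' = σ t (within the
sequence of length n), or n + 1 if the page is never requested again. -/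
def NextArrival (n : ℕ) (σ y : ℕ → ℕ) : Prop :=
  ∀ t < n, IsLeast {t' | (t < t' ∧ t' < n ∧ σ t' = σ t) ∨ t' = n + 1} (y t)

/-- Number of inversions: pairs (i,j) with y_i < y_j but h_i ≥ h_j. -/
def numInversions (n : ℕ) (h y : ℕ → ℕ) : ℕ :=
  ((Finset.range n ×ˢ Finset.range n).filter
    (fun p => y p.1 < y p.2 ∧ h p.2 ≤ h p.1)).card

/-- BlindOracle dynamics on caches of request indices: on a hit, replace the old
request index of the page by the current one (free); on a miss with space, insert;
on a miss with a full cache, evict a cached request with the latest predicted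
next arrival h. -/
def BlindOracleRun (n k : ℕ) (σ h : ℕ → ℕ) (B : ℕ → Finset ℕ) : Prop :=
  B 0 = ∅ ∧ ∀ t < n,
    (∃ i ∈ B t, σ i = σ t ∧ B (t + 1) = insert t (B t \ {i})) ∨
    ((∀ i ∈ B t, σ i ≠ σ t) ∧ (B t).card < k ∧ B (t + 1) = insert t (B t)) ∨
    ((∀ i ∈ B t, σ i ≠ σ t) ∧ (B t).card = k ∧
      ∃ b ∈ B t, (∀ i ∈ B t, h i ≤ h b) ∧ B (t + 1) = insert t (B t \ {b}))

/-- BlindOracle's cost: the number of evictions, i.e. of misses with a full cache. -/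
def blindOracleCost (n k : ℕ) (σ : ℕ → ℕ) (B : ℕ → Finset ℕ) : ℕ :=
  ((Finset.range n).filter
    (fun t => (∀ i ∈ B t, σ i ≠ σ t) ∧ (B t).card = k)).card

/-- A valid execution of any caching algorithm on caches of request indices. -/
def CacheRun (n k : ℕ) (A : ℕ → Finset ℕ) : Prop :=
  A 0 = ∅ ∧ (∀ t, (A t).card ≤ k) ∧
    ∀ t < n, t ∈ A (t + 1) ∧ A (t + 1) ⊆ insert t (A t)

/-- Eviction cost of a cache run: removals of requests whose page differs from
the currently requested page. -/
def runCost (n : ℕ) (σ : ℕ → ℕ) (A : ℕ → Finset ℕ) : ℕ :=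
  ∑ t ∈ Finset.range n, ((A t).filter (fun i => i ∉ A (t + 1) ∧ σ i ≠ σ t)).card

def IsLatestRequest (σ : ℕ → ℕ) (t b : ℕ) : Prop :=
  b < t ∧ ∀ s, b < s → s < t → σ s ≠ σ b

namespace IsLatestRequest

variable {σ : ℕ → ℕ} {t b b' : ℕ}

lemma eq_of_page_eq (hb : IsLatestRequest σ t b) (hb' : IsLatestRequest σ t b')
    (hσ : σ b = σ b') : b = b' := by
  rcases lt_trichotomy b b' with hlt | heq | hlt
  · exact absurd hσ.symm (hb.2 b' hlt hb'.1)
  · exact heq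
  · exact absurd hσ (hb'.2 b hlt hb.1)

lemma succ (hb : IsLatestRequest σ t b) (hσ : σ t ≠ σ b) : IsLatestRequest σ (t + 1) b := by
  refine ⟨hb.1.trans (lt_add_one t), fun s hbs hst => ?_⟩
  rcases Nat.lt_succ_iff_lt_or_eq.mp hst with hst | rfl
  · exact hb.2 s hbs hst
  · exact hσ

lemma self_succ (σ : ℕ → ℕ) (t : ℕ) : IsLatestRequest σ (t + 1) t :=
  ⟨lt_add_one t, fun _ h₁ h₂ => absurd h₂ (by omega)⟩

end IsLatestRequest

namespace NextArrival

variable {n : ℕ} {σ y : ℕ → ℕ}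

lemma le_of_page_eq (hy : NextArrival n σ y) {a s : ℕ} (has : a < s) (hs : s < n)
    (hσ : σ s = σ a) : y a ≤ s :=
  (hy a (has.trans hs)).2 (Or.inl ⟨has, hs, hσ⟩)

lemma le_of_isLatestRequest (hy : NextArrival n σ y) {t b : ℕ} (hb : IsLatestRequest σ t b)
    (ht : t ≤ n) : t ≤ y b := by
  rcases (hy b (hb.1.trans_le ht)).1 with ⟨hby, -, hσ⟩ | hyb
  · by_contra! hlt
    exact hb.2 _ hby hlt hσ
  · omega

lemma page_ne_of_le (hy : NextArrival n σ y) {t a b : ℕ} (ht : t < n) (hat : a < t)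
    (hb : IsLatestRequest σ (t + 1) b) (hba : y b ≤ y a) : σ a ≠ σ t := fun hσ => by
  have := hy.le_of_page_eq hat ht hσ.symm
  have := hy.le_of_isLatestRequest hb ht
  omega

end NextArrival

lemma CacheRun.lt_of_mem {n k : ℕ} {A : ℕ → Finset ℕ} (hA : CacheRun n k A) :
    ∀ {t}, t ≤ n → ∀ a ∈ A t, a < t
  | 0, _, a, ha => by simp [hA.1] at ha
  | t + 1, ht, a, ha => by
    rcases Finset.mem_insert.mp ((hA.2.2 t ht).2 ha) with rfl | ha
    · exact lt_add_one a
    · exact (hA.lt_of_mem (by omega) a ha).trans (lt_add_one t)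

namespace BlindOracleRun

variable {n k : ℕ} {σ h : ℕ → ℕ} {B : ℕ → Finset ℕ}

lemma subset_insert (hB : BlindOracleRun n k σ h B) {t : ℕ} (ht : t < n) :
    B (t + 1) ⊆ insert t (B t) := by
  rcases hB.2 t ht with ⟨_, _, _, hEq⟩ | ⟨_, _, hEq⟩ | ⟨_, _, _, _, _, hEq⟩ <;> rw [hEq]
  · exact Finset.insert_subset_insert _ Finset.sdiff_subset
  · exact Finset.insert_subset_insert _ Finset.sdiff_subset

lemma self_mem_succ (hB : BlindOracleRun n k σ h B) {t : ℕ} (ht : t < n) : t ∈ B (t + 1) := by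
  rcases hB.2 t ht with ⟨_, _, _, hEq⟩ | ⟨_, _, hEq⟩ | ⟨_, _, _, _, _, hEq⟩ <;>
    exact hEq ▸ Finset.mem_insert_self _ _

lemma isLatestRequest (hB : BlindOracleRun n k σ h B) :
    ∀ {t}, t ≤ n → ∀ b ∈ B t, IsLatestRequest σ t b
  | 0, _, b, hb => by simp [hB.1] at hb
  | t + 1, ht, b, hb => by
    have IH := hB.isLatestRequest (t := t) (by omega)
    rcases Finset.mem_insert.mp (hB.subset_insert ht hb) with rfl | hbt
    · exact IsLatestRequest.self_succ σ b
    refine (IH b hbt).succ fun hσ => ?_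
    rcases hB.2 t ht with ⟨i, hi, hσi, hEq⟩ | ⟨hmiss, -⟩ | ⟨hmiss, -⟩
    · rw [hEq, Finset.mem_insert, Finset.mem_sdiff, Finset.mem_singleton] at hb
      have hbi : b = i := (IH b hbt).eq_of_page_eq (IH i hi) (hσ ▸ hσi.symm)
      exact hb.elim (fun hb => absurd (IH b hbt).1 (hb ▸ lt_irrefl t)) (·.2 hbi)
    all_goals exact hmiss b hbt hσ.symm

end BlindOracleRun

structure IsValidMatching (y : ℕ → ℕ) (S T : Finset ℕ) (X : Finset (ℕ × ℕ)) : Prop where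
  mem : ∀ p ∈ X, p.1 ∈ S ∧ p.2 ∈ T ∧ y p.2 ≤ y p.1
  fst_inj : ∀ p ∈ X, ∀ q ∈ X, p.1 = q.1 → p = q
  snd_inj : ∀ p ∈ X, ∀ q ∈ X, p.2 = q.2 → p = q

def unmatched (X : Finset (ℕ × ℕ)) (T : Finset ℕ) : Finset ℕ :=
  T.filter fun b => ∀ p ∈ X, p.2 ≠ b

namespace IsValidMatching

variable {y : ℕ → ℕ} {S T S' T' : Finset ℕ} {X : Finset (ℕ × ℕ)}

lemma empty : IsValidMatching y S T ∅ :=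
  ⟨by simp, by simp, by simp⟩

lemma insert (hX : IsValidMatching y S T X) {a b : ℕ} (ha : a ∈ S) (hb : b ∈ T)
    (hab : y b ≤ y a) (hfa : ∀ p ∈ X, p.1 ≠ a) (hfb : ∀ p ∈ X, p.2 ≠ b) :
    IsValidMatching y S T (insert (a, b) X) where
  mem p hp := by
    rcases Finset.mem_insert.mp hp with rfl | hp
    exacts [⟨ha, hb, hab⟩, hX.mem p hp]
  fst_inj p hp q hq hpq := by
    rcases Finset.mem_insert.mp hp with rfl | hp <;> rcases Finset.mem_insert.mp hq with rfl | hq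
    exacts [rfl, absurd hpq.symm (hfa q hq), absurd hpq (hfa p hp), hX.fst_inj p hp q hq hpq]
  snd_inj p hp q hq hpq := by
    rcases Finset.mem_insert.mp hp with rfl | hp <;> rcases Finset.mem_insert.mp hq with rfl | hq
    exacts [rfl, absurd hpq.symm (hfb q hq), absurd hpq (hfb p hp), hX.snd_inj p hp q hq hpq]

lemma restrict (hX : IsValidMatching y S T X) (S' T' : Finset ℕ) :
    IsValidMatching y S' T' (X.filter fun p => p.1 ∈ S' ∧ p.2 ∈ T') where
  mem p hp := by
    rw [Finset.mem_filter] at hp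
    exact ⟨hp.2.1, hp.2.2, (hX.mem p hp.1).2.2⟩
  fst_inj p hp q hq := hX.fst_inj p (Finset.mem_filter.mp hp).1 q (Finset.mem_filter.mp hq).1
  snd_inj p hp q hq := hX.snd_inj p (Finset.mem_filter.mp hp).1 q (Finset.mem_filter.mp hq).1

end IsValidMatching

lemma card_filter_partner_mem_le {X : Finset (ℕ × ℕ)}
    (hinj : ∀ p ∈ X, ∀ q ∈ X, p.1 = q.1 → p = q) (T E : Finset ℕ) :
    (T.filter fun b => ∃ p ∈ X, p.2 = b ∧ p.1 ∈ E).card ≤ E.card := by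
  classical
  calc (T.filter fun b => ∃ p ∈ X, p.2 = b ∧ p.1 ∈ E).card
      ≤ ((X.filter fun p => p.1 ∈ E).image Prod.snd).card := by
        refine Finset.card_le_card fun b hb => ?_
        obtain ⟨p, hp, rfl, hpE⟩ := (Finset.mem_filter.mp hb).2
        exact Finset.mem_image_of_mem _ (Finset.mem_filter.mpr ⟨hp, hpE⟩)
    _ ≤ (X.filter fun p => p.1 ∈ E).card := Finset.card_image_le
    _ ≤ E.card := Finset.card_le_card_of_injOn Prod.fst (fun p hp => (Finset.mem_filter.mp hp).2)
        fun p hp q hq => hinj p (Finset.mem_filter.mp hp).1 q (Finset.mem_filter.mp hq).1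

lemma exists_forall_partner_not_mem {X : Finset (ℕ × ℕ)}
    (hinj : ∀ p ∈ X, ∀ q ∈ X, p.1 = q.1 → p = q) {T E : Finset ℕ} (hET : E.card < T.card) :
    ∃ b ∈ T, ∀ p ∈ X, p.2 = b → p.1 ∉ E := by
  by_contra! hall
  refine (card_filter_partner_mem_le hinj T E).not_gt (hET.trans_le (Finset.card_le_card ?_))
  intro b hb
  obtain ⟨p, hp, hpb, hpE⟩ := hall b hb
  exact Finset.mem_filter.mpr ⟨hb, p, hp, hpb, hpE⟩

def inversionSet (n : ℕ) (h y : ℕ → ℕ) : Finset (ℕ × ℕ) :=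
  (Finset.range n ×ˢ Finset.range n).filter fun p => y p.1 < y p.2 ∧ h p.2 ≤ h p.1

def costlyEvictions (σ : ℕ → ℕ) (A : ℕ → Finset ℕ) (t : ℕ) : Finset ℕ :=
  (A t).filter fun i => i ∉ A (t + 1) ∧ σ i ≠ σ t

lemma runCost_succ (t : ℕ) (σ : ℕ → ℕ) (A : ℕ → Finset ℕ) :
    runCost (t + 1) σ A = runCost t σ A + (costlyEvictions σ A t).card :=
  Finset.sum_range_succ _ _

lemma blindOracleCost_succ (t k : ℕ) (σ : ℕ → ℕ) (B : ℕ → Finset ℕ) :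
    blindOracleCost (t + 1) k σ B = blindOracleCost t k σ B +
      if (∀ i ∈ B t, σ i ≠ σ t) ∧ (B t).card = k then 1 else 0 := by
  simp only [blindOracleCost, Finset.card_filter, Finset.sum_range_succ]

def carryOver (A B : ℕ → Finset ℕ) (t : ℕ) (X : Finset (ℕ × ℕ)) : Finset (ℕ × ℕ) :=
  insert (t, t) (X.filter fun p => p.1 ∈ A (t + 1) ∧ p.2 ∈ B (t + 1))

/-- The requests to which a request left unmatched after step `t` can be charged. -/
def charged (σ : ℕ → ℕ) (A B : ℕ → Finset ℕ) (t : ℕ) (X : Finset (ℕ × ℕ)) : Finset ℕ :=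
  unmatched X (B t) ∪ (B t).filter fun b => ∃ p ∈ X, p.2 = b ∧ p.1 ∈ costlyEvictions σ A t

lemma card_charged_le {σ : ℕ → ℕ} {A B : ℕ → Finset ℕ} {t : ℕ} {X : Finset (ℕ × ℕ)}
    (hinj : ∀ p ∈ X, ∀ q ∈ X, p.1 = q.1 → p = q) :
    (charged σ A B t X).card ≤ (unmatched X (B t)).card + (costlyEvictions σ A t).card :=
  (Finset.card_union_le _ _).trans (Nat.add_le_add_left (card_filter_partner_mem_le hinj _ _) _)

section Step

variable {n k t : ℕ} {σ h y : ℕ → ℕ} {A B : ℕ → Finset ℕ} {X : Finset (ℕ × ℕ)}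

lemma isValidMatching_carryOver (hA : CacheRun n k A) (hB : BlindOracleRun n k σ h B)
    (ht : t < n) (hX : IsValidMatching y (A t) (B t) X) :
    IsValidMatching y (A (t + 1)) (B (t + 1)) (carryOver A B t X) := by
  refine (hX.restrict _ _).insert (hA.2.2 t ht).1 (hB.self_mem_succ ht) le_rfl
    (fun p hp => ?_) (fun p hp => ?_) <;> have hpX := (hX.mem p (Finset.mem_filter.mp hp).1)
  · exact (hA.lt_of_mem ht.le _ hpX.1).ne
  · exact (hB.isLatestRequest ht.le _ hpX.2.1).1.ne

lemma mem_charged_of_partners_evicted (hy : NextArrival n σ y) (hA : CacheRun n k A)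
    (ht : t < n) (hX : IsValidMatching y (A t) (B t) X) {b : ℕ} (hb : b ∈ B t)
    (hb' : IsLatestRequest σ (t + 1) b) (hpart : ∀ p ∈ X, p.2 = b → p.1 ∉ A (t + 1)) :
    b ∈ charged σ A B t X := by
  by_cases hm : ∀ p ∈ X, p.2 ≠ b
  · exact Finset.mem_union_left _ (Finset.mem_filter.mpr ⟨hb, hm⟩)
  push Not at hm
  obtain ⟨p, hp, rfl⟩ := hm
  obtain ⟨hpA, -, hyp⟩ := hX.mem p hp
  have hσ := hy.page_ne_of_le ht (hA.lt_of_mem ht.le _ hpA) hb' hyp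
  exact Finset.mem_union_right _ (Finset.mem_filter.mpr
    ⟨hb, p, hp, rfl, Finset.mem_filter.mpr ⟨hpA, hpart p hp rfl, hσ⟩⟩)

lemma unmatched_subset_charged (hy : NextArrival n σ y) (hA : CacheRun n k A)
    (hB : BlindOracleRun n k σ h B) (ht : t < n) (hX : IsValidMatching y (A t) (B t) X)
    {X' : Finset (ℕ × ℕ)} (hX' : carryOver A B t X ⊆ X') :
    unmatched X' (B (t + 1)) ⊆ charged σ A B t X := by
  intro b hb
  obtain ⟨hb', hun⟩ := Finset.mem_filter.mp hb
  have hbt : b ≠ t := fun hbt => hun (t, t) (hX' (Finset.mem_insert_self _ _)) hbt.symm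
  have hbB : b ∈ B t := (Finset.mem_insert.mp (hB.subset_insert ht hb')).resolve_left hbt
  refine mem_charged_of_partners_evicted hy hA ht hX hbB (hB.isLatestRequest ht _ hb')
    fun p hp hpb hpA => hun p (hX' ?_) hpb
  exact Finset.mem_insert_of_mem (Finset.mem_filter.mpr ⟨hp, hpA, hpb ▸ hb'⟩)

lemma card_unmatched_lt_card_charged (hy : NextArrival n σ y) (hA : CacheRun n k A)
    (hB : BlindOracleRun n k σ h B) (ht : t < n) (hX : IsValidMatching y (A t) (B t) X)
    {X' : Finset (ℕ × ℕ)} (hX' : carryOver A B t X ⊆ X') {w : ℕ}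
    (hw : w ∈ charged σ A B t X) (hw' : w ∉ unmatched X' (B (t + 1))) :
    (unmatched X' (B (t + 1))).card < (charged σ A B t X).card :=
  Finset.card_lt_card ⟨unmatched_subset_charged hy hA hB ht hX hX', fun hsub => hw' (hsub hw)⟩

/-- The optimal cache holds `t` and at most `k - 1` older requests, fewer than the `k`
requests of a full BlindOracle cache. -/
lemma exists_rematch_candidate (hA : CacheRun n k A) (ht : t < n)
    (hX : IsValidMatching y (A t) (B t) X) (hfull : (B t).card = k) {ps : ℕ × ℕ}
    (hps : ps ∈ X) (hpsA : ps.1 ∈ A (t + 1)) :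
    ∃ b0 ∈ B t, b0 ≠ ps.2 ∧ ∀ p ∈ X, p.2 = b0 → p.1 ∉ A (t + 1) := by
  have hlt : ∀ p ∈ X, p.1 ≠ t := fun p hp => (hA.lt_of_mem ht.le _ (hX.mem p hp).1).ne
  have hcard : ((A (t + 1)).erase t).card < (B t).card := by
    have := Finset.card_pos.mpr ⟨_, (hX.mem ps hps).2.1⟩
    rw [Finset.card_erase_of_mem (hA.2.2 t ht).1]
    have := hA.2.1 (t + 1)
    omega
  obtain ⟨b0, hb0, hpart⟩ := exists_forall_partner_not_mem hX.fst_inj hcard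
  refine ⟨b0, hb0, fun hb0ps => hpart ps hps hb0ps.symm ?_, fun p hp hpb hpA => ?_⟩
  · exact Finset.mem_erase.mpr ⟨hlt ps hps, hpsA⟩
  · exact hpart p hp hpb (Finset.mem_erase.mpr ⟨hlt p hp, hpA⟩)

lemma isValidMatching_rematch (hA : CacheRun n k A) (hB : BlindOracleRun n k σ h B)
    (ht : t < n) (hX : IsValidMatching y (A t) (B t) X) {ps : ℕ × ℕ} (hps : ps ∈ X)
    (hpsA : ps.1 ∈ A (t + 1)) (hpsB : ps.2 ∉ B (t + 1)) {b0 : ℕ} (hb0 : b0 ∈ B t)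
    (hb0' : b0 ∈ B (t + 1)) (hpart : ∀ p ∈ X, p.2 = b0 → p.1 ∉ A (t + 1))
    (hy0 : y b0 ≤ y ps.1) :
    IsValidMatching y (A (t + 1)) (B (t + 1)) (insert (ps.1, b0) (carryOver A B t X)) := by
  refine (isValidMatching_carryOver hA hB ht hX).insert hpsA hb0' hy0 ?_ ?_ <;>
    intro p hp hpq <;> rcases Finset.mem_insert.mp hp with rfl | hp
  · exact (hA.lt_of_mem ht.le _ (hX.mem ps hps).1).ne hpq.symm
  · obtain ⟨hpX, -, hpB⟩ := Finset.mem_filter.mp hp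
    exact hpsB (hX.fst_inj p hpX ps hps hpq ▸ hpB)
  · exact (hB.isLatestRequest ht.le _ hb0).1.ne hpq.symm
  · obtain ⟨hpX, hpA, -⟩ := Finset.mem_filter.mp hp
    exact hpart p hpX hpq hpA

lemma exists_matching_of_evict (hy : NextArrival n σ y) (hA : CacheRun n k A)
    (hB : BlindOracleRun n k σ h B) (ht : t < n) (hX : IsValidMatching y (A t) (B t) X)
    (hmiss : ∀ i ∈ B t, σ i ≠ σ t) (hfull : (B t).card = k) {bs : ℕ} (hbs : bs ∈ B t)
    (hmax : ∀ i ∈ B t, h i ≤ h bs) (hBeq : B (t + 1) = insert t (B t \ {bs})) :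
    ∃ X', IsValidMatching y (A (t + 1)) (B (t + 1)) X' ∧ carryOver A B t X ⊆ X' ∧
      ((unmatched X' (B (t + 1))).card < (charged σ A B t X).card ∨
        ∃ b0, (bs, b0) ∈ inversionSet n h y) := by
  have hlatest := hB.isLatestRequest ht.le
  have hbs' : bs ∉ B (t + 1) := by simp [hBeq, (hlatest bs hbs).1.ne]
  by_cases hc : bs ∈ charged σ A B t X
  · refine ⟨_, isValidMatching_carryOver hA hB ht hX, subset_rfl, Or.inl ?_⟩
    exact card_unmatched_lt_card_charged hy hA hB ht hX subset_rfl hc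
      fun hu => hbs' (Finset.mem_filter.mp hu).1
  obtain ⟨ps, hps, rfl, hpsA⟩ : ∃ ps ∈ X, ps.2 = bs ∧ ps.1 ∈ A (t + 1) := by
    by_contra! hall
    exact hc (mem_charged_of_partners_evicted hy hA ht hX hbs
      ((hlatest _ hbs).succ fun hσ => hmiss _ hbs hσ.symm) hall)
  obtain ⟨b0, hb0, hb0ne, hpart⟩ := exists_rematch_candidate hA ht hX hfull hps hpsA
  have hb0' : b0 ∈ B (t + 1) := by simp [hBeq, hb0, hb0ne]
  by_cases hy0 : y b0 ≤ y ps.1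
  · refine ⟨_, isValidMatching_rematch hA hB ht hX hps hpsA hbs' hb0 hb0' hpart hy0,
      Finset.subset_insert _ _, Or.inl ?_⟩
    refine card_unmatched_lt_card_charged hy hA hB ht hX (Finset.subset_insert _ _)
      (mem_charged_of_partners_evicted hy hA ht hX hb0 (hB.isLatestRequest ht _ hb0') hpart) ?_
    exact fun hu => (Finset.mem_filter.mp hu).2 _ (Finset.mem_insert_self _ _) rfl
  · refine ⟨_, isValidMatching_carryOver hA hB ht hX, subset_rfl, Or.inr ⟨b0, ?_⟩⟩
    refine Finset.mem_filter.mpr ⟨Finset.mem_product.mpr ⟨?_, ?_⟩,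
      (hX.mem ps hps).2.2.trans_lt (not_le.mp hy0), hmax b0 hb0⟩ <;>
      exact Finset.mem_range.mpr ((hlatest _ ‹_›).1.trans ht)

lemma exists_step (hy : NextArrival n σ y) (hA : CacheRun n k A)
    (hB : BlindOracleRun n k σ h B) (ht : t < n) (hX : IsValidMatching y (A t) (B t) X)
    {U : Finset (ℕ × ℕ)} (hUinv : U ⊆ inversionSet n h y)
    (hU : ∀ p ∈ U, p.1 < t ∧ p.1 ∉ B t) :
    ∃ X' U', IsValidMatching y (A (t + 1)) (B (t + 1)) X' ∧ U' ⊆ inversionSet n h y ∧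
      (∀ p ∈ U', p.1 < t + 1 ∧ p.1 ∉ B (t + 1)) ∧
      blindOracleCost (t + 1) k σ B + (unmatched X' (B (t + 1))).card + U.card ≤
        blindOracleCost t k σ B + (charged σ A B t X).card + U'.card := by
  have hU' : ∀ p ∈ U, p.1 < t + 1 ∧ p.1 ∉ B (t + 1) := fun p hp =>
    ⟨(hU p hp).1.trans (lt_add_one t), fun hpB => (Finset.mem_insert.mp
      (hB.subset_insert ht hpB)).elim (hU p hp).1.ne (hU p hp).2⟩
  have hcarry := Finset.card_le_card (unmatched_subset_charged hy hA hB ht hX subset_rfl)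
  rw [blindOracleCost_succ]
  rcases hB.2 t ht with ⟨i, hi, hσi, -⟩ | ⟨-, hlt, -⟩ | ⟨hmiss, hfull, bs, hbs, hmax, hBeq⟩
  · refine ⟨_, U, isValidMatching_carryOver hA hB ht hX, hUinv, hU', ?_⟩
    rw [if_neg fun hc => hc.1 i hi hσi]
    omega
  · refine ⟨_, U, isValidMatching_carryOver hA hB ht hX, hUinv, hU', ?_⟩
    rw [if_neg fun hc => hlt.ne hc.2]
    omega
  rw [if_pos ⟨hmiss, hfull⟩]
  obtain ⟨X', hX', hsub, hdrop | ⟨b0, hinv⟩⟩ :=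
    exists_matching_of_evict hy hA hB ht hX hmiss hfull hbs hmax hBeq
  · exact ⟨X', U, hX', hUinv, hU', by omega⟩
  have hbst : bs < t := (hB.isLatestRequest ht.le bs hbs).1
  have hbs' : bs ∉ B (t + 1) := by simp [hBeq, hbst.ne]
  refine ⟨X', insert (bs, b0) U, hX', Finset.insert_subset hinv hUinv, ?_, ?_⟩
  · intro p hp
    rcases Finset.mem_insert.mp hp with rfl | hp
    exacts [⟨hbst.trans (lt_add_one t), hbs'⟩, hU' p hp]
  · rw [Finset.card_insert_of_notMem fun hc => (hU _ hc).2 hbs]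
    have := Finset.card_le_card (unmatched_subset_charged hy hA hB ht hX hsub)
    omega

/-- Each inversion in `U` is charged to its first component, a request already evicted
by BlindOracle. -/
lemma exists_invariant (hy : NextArrival n σ y) (hB : BlindOracleRun n k σ h B)
    (hA : CacheRun n k A) : ∀ {t}, t ≤ n → ∃ X U,
      IsValidMatching y (A t) (B t) X ∧ U ⊆ inversionSet n h y ∧
      (∀ p ∈ U, p.1 < t ∧ p.1 ∉ B t) ∧
      blindOracleCost t k σ B + (unmatched X (B t)).card ≤ runCost t σ A + U.card
  | 0, _ => ⟨∅, ∅, .empty, Finset.empty_subset _, by simp,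
      by simp [blindOracleCost, runCost, unmatched, hB.1]⟩
  | t + 1, ht => by
    obtain ⟨X, U, hX, hUinv, hU, hinv⟩ := exists_invariant hy hB hA (t := t) (by omega)
    obtain ⟨X', U', hX', hU'inv, hU', hstep⟩ := exists_step hy hA hB ht hX hUinv hU
    have := card_charged_le (σ := σ) (A := A) (B := B) (t := t) hX.fst_inj
    refine ⟨X', U', hX', hU'inv, hU', ?_⟩
    rw [runCost_succ]
    omega

end Step

/-- For BlindOracle B and (in particular) the offline optimal A,
there exists a valid matching X between the final caches (each matched pair
(a,b) has the next arrival of b no later than that of a) such that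
ALG_B + Φ(n) ≤ cost(A) + M, where Φ(n) is the number of unmatched requests in
B's final cache; in particular ALG_B ≤ OPT + M. -/
theorem blindoracle_vs_opt_matching
    (n k : ℕ) (σ h y : ℕ → ℕ)
    (hy : NextArrival n σ y)
    (B : ℕ → Finset ℕ) (hB : BlindOracleRun n k σ h B)
    (A : ℕ → Finset ℕ) (hA : CacheRun n k A) :
    ∃ X : Finset (ℕ × ℕ),
      (∀ p ∈ X, p.1 ∈ A n ∧ p.2 ∈ B n ∧ y p.2 ≤ y p.1) ∧
      (∀ p ∈ X, ∀ q ∈ X, p.1 = q.1 → p = q) ∧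
      (∀ p ∈ X, ∀ q ∈ X, p.2 = q.2 → p = q) ∧
      blindOracleCost n k σ B + ((B n).filter (fun b => ∀ p ∈ X, p.2 ≠ b)).card
        ≤ runCost n σ A + numInversions n h y ∧
      blindOracleCost n k σ B ≤ runCost n σ A + numInversions n h y := by
  obtain ⟨X, U, hX, hUinv, -, hinv⟩ := exists_invariant hy hB hA le_rfl
  have hpotential : blindOracleCost n k σ B + (unmatched X (B n)).card
      ≤ runCost n σ A + numInversions n h y :=
    hinv.trans (Nat.add_le_add_left (Finset.card_le_card hUinv) _)
  exact ⟨X, hX.mem, hX.fst_inj, hX.snd_inj, hpotential, le_of_add_le_left hpotential⟩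
end

section
/- The competitive ratio of BlindOracle is at most min(1 + 2ε, 2 + 4ε/(k−1)), where ε = η/OPT; i.e., ALG_B ≤ min(1 + 2η/OPT, 2 + (4/(k−1))·η/OPT)·OPT. -/
/-! Since `M ≤ 2η`, the two assumed lemmas give the additive bounds `ALG_B ≤ OPT + 2η` and
`ALG_B ≤ 2 · OPT + 4η / (k − 1)`; dividing by `OPT` turns each into one of the two ratios. -/

theorem le_add_mul_div_mul_of_le_mul_add_mul {A OPT c d η : ℝ} (hOPT : 0 < OPT)
    (h : A ≤ c * OPT + d * η) : A ≤ (c + d * (η / OPT)) * OPT := by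
  rwa [add_mul, mul_assoc, div_mul_cancel₀ η hOPT.ne']

theorem blindoracle_competitive_ratio_general
    (k : ℕ) (hk : 2 ≤ k)
    (ALGB OPT M η : ℝ)
    (hOPT : OPT > 0)
    (h1 : ALGB ≤ OPT + M)
    (h2 : ((k : ℝ) - 1) * ALGB ≤ 2 * ((k : ℝ) - 1) * OPT + 2 * M)
    (hη : η ≥ M / 2) :
    ALGB ≤ min (1 + 2 * η / OPT) (2 + (4 / ((k : ℝ) - 1)) * (η / OPT)) * OPT := by
  have hk1 : 0 < (k : ℝ) - 1 := by
    have : (2 : ℝ) ≤ k := by exact_mod_cast hk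
    linarith
  have bound₁ : ALGB ≤ 1 * OPT + 2 * η := by linarith
  have bound₂ : ALGB ≤ 2 * OPT + 4 / ((k : ℝ) - 1) * η := by
    rw [← mul_le_mul_iff_of_pos_left hk1, mul_add, div_mul_eq_mul_div, mul_div_cancel₀ _ hk1.ne']
    linarith
  rw [min_mul_of_nonneg _ _ hOPT.le, mul_div_assoc]
  exact le_min (le_add_mul_div_mul_of_le_mul_add_mul hOPT bound₁)
    (le_add_mul_div_mul_of_le_mul_add_mul hOPT bound₂)

/-- Given the lemmas ALG_B ≤ OPT + M, (k−1)·ALG_B ≤ 2(k−1)·OPT + 2M,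
and η ≥ M/2, BlindOracle's competitive ratio is at most
min(1 + 2η/OPT, 2 + (4/(k−1))·η/OPT). -/
theorem blindoracle_competitive_ratio
    (k : ℕ) (hk : 2 ≤ k)
    (ALGB OPT M η : ℝ)
    (hOPT : OPT > 0) (hMnn : 0 ≤ M)
    (h1 : ALGB ≤ OPT + M)
    (h2 : ((k : ℝ) - 1) * ALGB ≤ 2 * ((k : ℝ) - 1) * OPT + 2 * M)
    (hη : η ≥ M / 2) :
    ALGB ≤ min (1 + 2 * η / OPT) (2 + (4 / ((k : ℝ) - 1)) * (η / OPT)) * OPT :=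
  blindoracle_competitive_ratio_general k hk ALGB OPT M η hOPT h1 h2 hη
end

section
/- In the lower-bound phase construction with parameter j < k, the offline optimal algorithm incurs at most 2 evictions per phase. -/
/-!
The offline algorithm keeps `P₁, …, P_{k-1}` and `Q₀` until `P_k` is first requested, and then
evicts `Q₀`; the rest of step (1) consists of hits. When `Q₀` returns it evicts a page `p` among
`P₁, …, P_k` that none of the `j < k` requests of step (3) asks for; such a page exists by
counting, and step (3) consists of hits.
-/

open Finset

/-- The offline cache at time `t`, pages coded as in the statement (`0` is `Q₀`); `p` is the page
evicted when `Q₀` returns. -/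
def optCache (k p t : ℕ) : Finset ℕ :=
  if t < k then range k else if t ≤ k * k then Icc 1 k else (range (k + 1)).erase p

theorem optCache_zero {k : ℕ} (hk : 0 < k) (p : ℕ) :
    optCache k p 0 = insert 0 ((range (k - 1)).image (· + 1)) := by
  obtain ⟨n, rfl⟩ := Nat.exists_eq_add_one_of_ne_zero hk.ne'
  rw [optCache, if_pos hk, range_add_one', map_eq_image, Nat.add_sub_cancel]
  rfl

theorem card_optCache {k p : ℕ} (hp : p ≤ k) (t : ℕ) : #(optCache k p t) = k := by
  unfold optCache
  split_ifs
  · exact card_range k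
  · simp
  · rw [card_erase_of_mem (mem_range.2 (Nat.lt_succ_of_le hp)), card_range]
    omega

theorem optCache_succ {k t : ℕ} (p : ℕ) (h₁ : t ≠ k - 1) (h₂ : t ≠ k * k) :
    optCache k p (t + 1) = optCache k p t := by
  unfold optCache
  split_ifs <;> first | rfl | omega

theorem optCache_serves_k {k : ℕ} (p : ℕ) (hk : 0 < k) :
    k ∈ optCache k p k ∧ optCache k p k ⊆ insert k (optCache k p (k - 1)) := by
  simp only [optCache, lt_irrefl, Nat.le_mul_self, if_false, if_true, Nat.sub_lt hk one_pos]
  refine ⟨mem_Icc.2 ⟨hk, le_rfl⟩, fun x hx => ?_⟩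
  rw [mem_Icc] at hx
  rw [mem_insert, mem_range]
  omega

theorem optCache_serves_zero {k p : ℕ} (hp : p ≠ 0) :
    0 ∈ optCache k p (k * k + 1) ∧
      optCache k p (k * k + 1) ⊆ insert 0 (optCache k p (k * k)) := by
  have hkk := Nat.le_mul_self k
  simp only [optCache, show ¬ k * k < k by omega, show ¬ k * k + 1 < k by omega,
    show ¬ k * k + 1 ≤ k * k by omega, le_rfl, if_false, if_true]
  refine ⟨mem_erase.2 ⟨hp.symm, mem_range.2 k.succ_pos⟩, fun x hx => ?_⟩
  rw [mem_erase, mem_range] at hx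
  rw [mem_insert, mem_Icc]
  omega

theorem request_mem_optCache {k j p : ℕ} {r : ℕ → ℕ}
    (hstep1 : ∀ t < k * k, r t = t % k + 1)
    (hstep3 : ∀ t, k * k < t → t < k * k + 1 + j → r t ≤ k)
    (hp : p ∉ (Ioo (k * k) (k * k + 1 + j)).image r)
    (t : ℕ) (ht : t < k * k + 1 + j) (h₁ : t ≠ k - 1) (h₂ : t ≠ k * k) :
    r t ∈ optCache k p t := by
  unfold optCache
  split_ifs with hlt hle
  · rw [hstep1 t (hlt.trans_le (Nat.le_mul_self k)), Nat.mod_eq_of_lt hlt, mem_range]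
    omega
  · have hk : 0 < k := Nat.pos_of_ne_zero (by rintro rfl; omega)
    rw [hstep1 t (by omega), mem_Icc]
    have := Nat.mod_lt t hk
    omega
  · have hlt' : k * k < t := by omega
    refine mem_erase.2 ⟨fun he => hp (mem_image.2 ⟨t, mem_Ioo.2 ⟨hlt', ht⟩, he⟩), ?_⟩
    exact mem_range.2 (Nat.lt_succ_of_le (hstep3 t hlt' ht))

theorem opt_at_most_two_per_phase_general
    (k j : ℕ) (hj : j < k)
    (r : ℕ → ℕ)
    (hstep1 : ∀ t < k * k, r t = t % k + 1)
    (hstep2 : r (k * k) = 0)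
    (hstep3 : ∀ t, k * k < t → t < k * k + 1 + j → r t ≤ k) :
    ∃ C : ℕ → Finset ℕ,
      C 0 = insert 0 (Finset.image (· + 1) (Finset.range (k - 1))) ∧
      (∀ t, (C t).card ≤ k) ∧
      (∀ t < k * k + 1 + j, r t ∈ C (t + 1) ∧ C (t + 1) ⊆ insert (r t) (C t)) ∧
      ((Finset.range (k * k + 1 + j)).filter (fun t => r t ∉ C t)).card ≤ 2 := by
  have hk : 0 < k := by omega
  obtain ⟨p, hpk, hp⟩ : ∃ p ∈ Icc 1 k, p ∉ (Ioo (k * k) (k * k + 1 + j)).image r :=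
    exists_mem_notMem_of_card_lt_card <|
      card_image_le.trans_lt (by rw [Nat.card_Ioo, Nat.card_Icc]; omega)
  rw [mem_Icc] at hpk
  have hit := request_mem_optCache hstep1 hstep3 hp
  refine ⟨optCache k p, optCache_zero hk p, fun t => (card_optCache hpk.2 t).le,
    fun t ht => ?_, ?_⟩
  · by_cases h₁ : t = k - 1
    · subst h₁
      have hlt : k - 1 < k := Nat.sub_lt hk one_pos
      rw [hstep1 _ (hlt.trans_le (Nat.le_mul_self k)), Nat.mod_eq_of_lt hlt,
        Nat.sub_add_cancel hk]
      exact optCache_serves_k p hk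
    by_cases h₂ : t = k * k
    · subst h₂
      exact hstep2 ▸ optCache_serves_zero (by omega)
    rw [optCache_succ p h₁ h₂]
    exact ⟨hit t ht h₁ h₂, subset_insert _ _⟩
  · refine (card_le_card (t := {k - 1, k * k}) fun t ht => ?_).trans card_le_two
    rw [mem_filter, mem_range] at ht
    rw [mem_insert, mem_singleton]
    by_contra! h
    exact ht.2 (hit t ht.1 h.1 h.2)

/-- In the lower-bound phase construction with parameter j < k
(pages coded 1,…,k for P₁,…,P_k and 0 for Q₀; step (1) requests P₁,…,P_k in
order k times, step (2) requests Q₀, step (3) makes j further requests among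
these k+1 pages), the offline optimal incurs at most 2 evictions per phase:
there is a valid schedule on a size-k cache, starting from the cache
{Q₀, P₁, …, P_{k−1}}, that misses at most twice during the phase. -/
theorem opt_at_most_two_per_phase
    (k j : ℕ) (hk : 2 ≤ k) (hj : j < k)
    (r : ℕ → ℕ)
    (hstep1 : ∀ t < k * k, r t = t % k + 1)
    (hstep2 : r (k * k) = 0)
    (hstep3 : ∀ t, k * k < t → t < k * k + 1 + j → r t ≤ k) :
    ∃ C : ℕ → Finset ℕ,
      C 0 = insert 0 (Finset.image (· + 1) (Finset.range (k - 1))) ∧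
      (∀ t, (C t).card ≤ k) ∧
      (∀ t < k * k + 1 + j, r t ∈ C (t + 1) ∧ C (t + 1) ⊆ insert (r t) (C t)) ∧
      ((Finset.range (k * k + 1 + j)).filter (fun t => r t ∉ C t)).card ≤ 2 :=
  opt_at_most_two_per_phase_general k j hj r hstep1 hstep2 hstep3
end

section
/- In the lower-bound phase construction with parameter j < k, any deterministic online algorithm A incurs at least j + 1 evictions per phase: either it pays at least k ≥ j+1 during step (1), or its cache equals {P_1,...,P_k} after step (1) and then each of the j+1 subsequent requests (the request to Q_0 and the j adversarial requests to its just-evicted page) forces an eviction. -/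
/-!
Caches always hold `k` pages, so a request that hits leaves the cache unchanged and a request
that misses evicts a page. If step (1) costs fewer than `k` misses, some round `P₁, …, P_k` of
it is served without a miss; the cache is then exactly `{P₁, …, P_k}`, and it stays so until the
end of step (1), where every request is a hit. Hence `Q₀` misses, and each of the `j` adversarial
requests asks for the page evicted just before, so it misses as well.
-/

open Finset

theorem exists_block_forall_not_of_card_filter_lt {P : ℕ → Prop} [DecidablePred P] {k m : ℕ}
    (h : ((range (k * m)).filter P).card < m) : ∃ i < m, ∀ d < k, ¬ P (k * i + d) := by
  obtain ⟨i, hi, hmiss⟩ := exists_mem_notMem_of_card_lt_card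
    (s := ((range (k * m)).filter P).image (· / k)) (t := range m)
    (by simpa using card_image_le.trans_lt h)
  refine ⟨i, mem_range.1 hi, fun d hd hP => hmiss (mem_image.2 ⟨k * i + d, ?_, ?_⟩)⟩
  · have : k * i + d < k * m := by nlinarith [mem_range.1 hi]
    exact mem_filter.2 ⟨mem_range.2 this, hP⟩
  · simp [Nat.mul_add_div (show 0 < k by omega), Nat.div_eq_of_lt hd]

section Paging

variable {α : Type*} [DecidableEq α] {k : ℕ} {r : ℕ → α} {C : ℕ → Finset α}

/-- `C t` is the cache before request `r t`; serving the request brings `r t` in and may evict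
pages, but loads nothing else. -/
def Serves (r : ℕ → α) (C : ℕ → Finset α) (t : ℕ) : Prop :=
  r t ∈ C (t + 1) ∧ C (t + 1) ⊆ insert (r t) (C t)

theorem Serves.cache_succ_eq_of_hit (hfull : ∀ t, (C t).card = k) {t : ℕ} (hs : Serves r C t)
    (hhit : r t ∈ C t) : C (t + 1) = C t :=
  eq_of_subset_of_card_le (insert_eq_self.2 hhit ▸ hs.2) (by rw [hfull, hfull])

theorem Serves.exists_evicted_of_miss (hfull : ∀ t, (C t).card = k) {t : ℕ} (hs : Serves r C t)
    (hmiss : r t ∉ C t) : ∃ p ∈ C t, p ∉ C (t + 1) := by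
  by_contra! hkeep
  have : C t = C (t + 1) := eq_of_subset_of_card_le hkeep (by rw [hfull, hfull])
  exact hmiss (this ▸ hs.1)

variable {T : ℕ} (hfull : ∀ t, (C t).card = k) (hserve : ∀ t < T, Serves r C t)
include hfull hserve

theorem cache_add_eq_of_forall_hit {a n : ℕ} (hn : a + n ≤ T)
    (hhit : ∀ m < n, r (a + m) ∈ C (a + m)) : C (a + n) = C a := by
  induction n with
  | zero => rfl
  | succ n ih =>
    rw [← add_assoc, (hserve _ (by omega)).cache_succ_eq_of_hit hfull (hhit n (by omega)),
      ih (by omega) fun m hm => hhit m (by omega)]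

theorem cache_add_eq_of_forall_mem {a n : ℕ} (hn : a + n ≤ T)
    (hmem : ∀ m < n, r (a + m) ∈ C a) : C (a + n) = C a := by
  induction n with
  | zero => rfl
  | succ n ih =>
    have hprev : C (a + n) = C a := ih (by omega) fun m hm => hmem m (by omega)
    rw [← add_assoc, (hserve _ (by omega)).cache_succ_eq_of_hit hfull
      (hprev ▸ hmem n (by omega)), hprev]

theorem miss_of_miss_of_request_evicted {a : ℕ}
    (hadv : ∀ t, a ≤ t → t + 1 < T → ∀ p ∈ C t, p ∉ C (t + 1) → r (t + 1) = p)
    (hmiss : r a ∉ C a) : ∀ t, a ≤ t → t < T → r t ∉ C t := by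
  intro t hat
  induction t, hat using Nat.le_induction with
  | base => exact fun _ => hmiss
  | succ t hat ih =>
    intro ht
    obtain ⟨p, hp, hevict⟩ :=
      (hserve t (by omega)).exists_evicted_of_miss hfull (ih (by omega))
    rw [hadv t hat ht p hp hevict]
    exact hevict

end Paging

theorem cache_eq_Icc_of_card_misses_lt {k : ℕ} {r : ℕ → ℕ} {C : ℕ → Finset ℕ}
    (hfull : ∀ t, (C t).card = k) (hserve : ∀ t < k * k, Serves r C t)
    (hround : ∀ t < k * k, r t = t % k + 1)
    (hfew : ((range (k * k)).filter fun t => r t ∉ C t).card < k) :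
    C (k * k) = Icc 1 k := by
  obtain ⟨i, hi, hclean⟩ := exists_block_forall_not_of_card_filter_lt hfew
  have hik : k * i + k ≤ k * k := by nlinarith
  have hreq : ∀ d < k, r (k * i + d) = d + 1 := fun d hd => by
    rw [hround _ (by omega), Nat.mul_add_mod, Nat.mod_eq_of_lt hd]
  have hround_mem : Icc 1 k ⊆ C (k * i) := fun p hp => by
    obtain ⟨hp1, hpk⟩ := mem_Icc.1 hp
    have hhit := not_not.1 (hclean (p - 1) (by omega))
    rwa [cache_add_eq_of_forall_hit hfull hserve (by omega)
      fun m hm => not_not.1 (hclean m (by omega)), hreq _ (by omega), Nat.sub_add_cancel hp1] at hhit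
  have hcache : C (k * i) = Icc 1 k :=
    (eq_of_subset_of_card_le hround_mem (by simp [hfull])).symm
  have hstay := cache_add_eq_of_forall_mem (a := k * i) (n := k * k - k * i) hfull hserve (by omega)
    fun m hm => by
      rw [hcache, hround _ (by omega), mem_Icc]
      have := Nat.mod_lt (k * i + m) (show 0 < k by omega)
      omega
  rwa [Nat.add_sub_cancel' (by omega), hcache] at hstay

theorem online_at_least_j_plus_one_per_phase_general
    (k j : ℕ) (hj : j < k)
    (r : ℕ → ℕ) (C : ℕ → Finset ℕ)
    (hfull : ∀ t, (C t).card = k)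
    (hserve : ∀ t < k * k + 1 + j, r t ∈ C (t + 1) ∧ C (t + 1) ⊆ insert (r t) (C t))
    (hstep1 : ∀ t < k * k, r t = t % k + 1)
    (hstep2 : r (k * k) = 0)
    (hstep3 : ∀ t, k * k ≤ t → t + 1 < k * k + 1 + j →
      ∀ p ∈ C t, p ∉ C (t + 1) → r (t + 1) = p) :
    j + 1 ≤ ((Finset.range (k * k + 1 + j)).filter (fun t => r t ∉ C t)).card := by
  by_cases hfew : ((range (k * k)).filter fun t => r t ∉ C t).card < k
  · have hcache : C (k * k) = Icc 1 k :=
      cache_eq_Icc_of_card_misses_lt hfull (fun t ht => hserve t (by omega)) hstep1 hfew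
    have hmiss : r (k * k) ∉ C (k * k) := by simp [hcache, hstep2]
    have hmisses := miss_of_miss_of_request_evicted hfull hserve hstep3 hmiss
    calc j + 1 = (Ico (k * k) (k * k + 1 + j)).card := by simp [Nat.card_Ico]; omega
      _ ≤ _ := card_le_card fun t ht => by
        obtain ⟨hlo, hhi⟩ := mem_Ico.1 ht
        exact mem_filter.2 ⟨mem_range.2 hhi, hmisses t hlo hhi⟩
  · calc j + 1 ≤ k := hj
      _ ≤ _ := not_lt.1 hfew
      _ ≤ _ := card_le_card (filter_subset_filter _ (range_subset_range.2 (by omega)))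

/-- In the lower-bound phase construction with parameter j < k,
any deterministic online algorithm A (modeled by its full-cache states C over
pages 0,…,k, with Q₀ = 0 and Pᵢ = i) incurs at least j + 1 evictions per phase:
the phase requests P₁,…,P_k in order k times, then Q₀, then j adversarial
requests, each being the page A evicted on the previous request (or an
arbitrary page if no eviction occurred). Either A pays at least k ≥ j + 1
during step (1), or its cache is {P₁,…,P_k} after step (1) and each of the
j + 1 remaining requests forces an eviction. -/
theorem online_at_least_j_plus_one_per_phase
    (k j : ℕ) (hk : 1 ≤ k) (hj : j < k)
    (r : ℕ → ℕ) (C : ℕ → Finset ℕ)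
    (hrange : ∀ t < k * k + 1 + j, r t ≤ k)
    (hfull : ∀ t, (C t).card = k)
    (hserve : ∀ t < k * k + 1 + j, r t ∈ C (t + 1) ∧ C (t + 1) ⊆ insert (r t) (C t))
    (hstep1 : ∀ t < k * k, r t = t % k + 1)
    (hstep2 : r (k * k) = 0)
    (hstep3 : ∀ t, k * k ≤ t → t + 1 < k * k + 1 + j →
      ∀ p ∈ C t, p ∉ C (t + 1) → r (t + 1) = p) :
    j + 1 ≤ ((Finset.range (k * k + 1 + j)).filter (fun t => r t ∉ C t)).card :=
  online_at_least_j_plus_one_per_phase_general k j hj r C hfull hserve hstep1 hstep2 hstep3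
end

section
/- Every deterministic learning-augmented online caching algorithm has competitive ratio at least 1 + Ω(min((1/k)·(η/OPT), k)); i.e., for every deterministic algorithm A, every k ≥ 2, and every value r ∈ [0, k], there exist inputs (σ, h) with η/(k·OPT) arbitrarily close to r and OPT arbitrarily large such that ALG_A(σ,h) ≥ OPT(σ) + C·η(σ,h)/k for a universal constant C > 0. -/
/-- The history (most recent first) of (request, prediction) pairs before time t. -/
def hist (σ h : ℕ → ℕ) (t : ℕ) : List (ℕ × ℕ) :=
  ((List.range t).map (fun i => (σ i, h i))).reverse

/-- A deterministic learning-augmented caching algorithm with cache size k,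
given by the (page-level) cache contents it holds after any history. -/
def DetAlgorithm (k : ℕ) (Alg : List (ℕ × ℕ) → Finset ℕ) : Prop :=
  Alg [] = ∅ ∧ (∀ l, (Alg l).card ≤ k) ∧
    ∀ (pr : ℕ × ℕ) (l : List (ℕ × ℕ)),
      pr.1 ∈ Alg (pr :: l) ∧ Alg (pr :: l) ⊆ insert pr.1 (Alg l)

/-- The algorithm's eviction cost on the first n requests of (σ, h). -/
def algCost (Alg : List (ℕ × ℕ) → Finset ℕ) (σ h : ℕ → ℕ) (n : ℕ) : ℕ :=
  ∑ t ∈ Finset.range n, (Alg (hist σ h t) \ Alg (hist σ h (t + 1))).card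

/-- A valid offline schedule for σ on a size-k cache. -/
def IsSchedule (k n : ℕ) (σ : ℕ → ℕ) (C : ℕ → Finset ℕ) : Prop :=
  C 0 = ∅ ∧ (∀ t, (C t).card ≤ k) ∧
    ∀ t < n, σ t ∈ C (t + 1) ∧ C (t + 1) ⊆ insert (σ t) (C t)

/-- Eviction cost of a schedule. -/
def schedCost (n : ℕ) (σ : ℕ → ℕ) (C : ℕ → Finset ℕ) : ℕ :=
  ∑ t ∈ Finset.range n, (C t \ C (t + 1)).card

/-- Offline optimal eviction cost. -/
noncomputable def optCost (k n : ℕ) (σ : ℕ → ℕ) : ℕ :=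
  sInf {c : ℕ | ∃ C : ℕ → Finset ℕ, IsSchedule k n σ C ∧ schedCost n σ C = c}

/-- ℓ1 prediction error. -/
def l1Error (n : ℕ) (h y : ℕ → ℕ) : ℕ :=
  ∑ t ∈ Finset.range n, ((h t : ℤ) - (y t : ℤ)).natAbs

/-!
An adversary first requests `M` fresh pages, on which every schedule faults, and then `T` pages
of `{0, …, k}`: every third request sweeps cyclically through `{0, …, k}`, every other one asks
for the page the deterministic algorithm is currently missing. The algorithm thus faults about
`M + 2T/3` times, whereas an offline schedule that always evicts a page not requested during the
next `k` steps faults only about `M + T/k` times. Because of the sweeps every page recurs within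
`O(k)` steps, so even the useless predictions `h t = t` cost only `O(k T)` error, and the last
prediction, which the algorithm cannot use before the end, tops the error up to `⌈r k OPT⌉`.
Choosing `M ≈ 8T/r` makes this error about `r k M` while the gap `ALG - OPT ≥ T/6` is of order
`r M`.
-/

open Finset

namespace Caching

lemma hist_succ (σ h : ℕ → ℕ) (t : ℕ) : hist σ h (t + 1) = (σ t, h t) :: hist σ h t := by
  simp [hist, List.range_succ]

lemma hist_congr {σ h h' : ℕ → ℕ} {t : ℕ} (hh : ∀ i < t, h i = h' i) :
    hist σ h t = hist σ h' t := by
  unfold hist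
  congr 1
  exact List.map_congr_left fun i hi => by rw [hh i (List.mem_range.mp hi)]

section Schedules

variable {k n : ℕ} {σ : ℕ → ℕ} {C : ℕ → Finset ℕ}

lemma DetAlgorithm.isSchedule {Alg : List (ℕ × ℕ) → Finset ℕ} (hAlg : DetAlgorithm k Alg)
    (h : ℕ → ℕ) : IsSchedule k n σ (fun t => Alg (hist σ h t)) :=
  ⟨by simpa [hist] using hAlg.1, fun _ => hAlg.2.1 _, fun t _ => by
    simpa only [hist_succ] using hAlg.2.2 (σ t, h t) (hist σ h t)⟩

lemma optCost_le_schedCost (hC : IsSchedule k n σ C) : optCost k n σ ≤ schedCost n σ C :=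
  Nat.sInf_le ⟨C, hC, rfl⟩

lemma exists_schedCost_eq_optCost (hC : IsSchedule k n σ C) :
    ∃ C', IsSchedule k n σ C' ∧ schedCost n σ C' = optCost k n σ :=
  Nat.sInf_mem (s := {c | ∃ C, IsSchedule k n σ C ∧ schedCost n σ C = c}) ⟨_, C, hC, rfl⟩

lemma optCost_le_algCost {Alg : List (ℕ × ℕ) → Finset ℕ} (hAlg : DetAlgorithm k Alg)
    (h : ℕ → ℕ) : optCost k n σ ≤ algCost Alg σ h n :=
  optCost_le_schedCost (DetAlgorithm.isSchedule hAlg h)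

lemma IsSchedule.exists_lt_of_mem (hC : IsSchedule k n σ C) {t p : ℕ} (ht : t ≤ n)
    (hp : p ∈ C t) : ∃ s < t, σ s = p := by
  induction t with
  | zero => simp [hC.1] at hp
  | succ t ih =>
    rcases mem_insert.mp ((hC.2.2 t ht).2 hp) with rfl | hp
    · exact ⟨t, t.lt_succ_self, rfl⟩
    · obtain ⟨s, hs, rfl⟩ := ih (by omega) hp
      exact ⟨s, by omega, rfl⟩

lemma IsSchedule.notMem_of_first (hC : IsSchedule k n σ C) {t : ℕ} (ht : t ≤ n)
    (hfirst : ∀ s < t, σ s ≠ σ t) : σ t ∉ C t := fun hmem => by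
  obtain ⟨s, hs, hσs⟩ := IsSchedule.exists_lt_of_mem hC ht hmem
  exact hfirst s hs hσs

def misses (n : ℕ) (σ : ℕ → ℕ) (C : ℕ → Finset ℕ) : Finset ℕ :=
  (range n).filter fun t => σ t ∉ C t

lemma card_insert_le_card_sdiff_add_card {s t : Finset ℕ} {p : ℕ} (hp : p ∈ t) :
    #(insert p s) ≤ #(s \ t) + #t := by
  refine (card_le_card ?_).trans (card_union_le _ _)
  rw [sdiff_union_self_eq_union]
  exact insert_subset (mem_union_right _ hp) subset_union_left

/-- Every fault brings a new page into the cache, which has to leave it again or stay to the end. -/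
lemma card_misses_le (hC : IsSchedule k n σ C) : #(misses n σ C) ≤ schedCost n σ C + #(C n) := by
  obtain ⟨hC0, -, hstep⟩ := hC
  induction n with
  | zero => simp [misses, schedCost]
  | succ n ih =>
    have ih := ih fun t ht => hstep t (by omega)
    have hgrow := card_insert_le_card_sdiff_add_card (s := C n) (hstep n n.lt_succ_self).1
    have hcost : schedCost (n + 1) σ C = schedCost n σ C + #(C n \ C (n + 1)) :=
      sum_range_succ _ _
    rw [misses, range_add_one, filter_insert, hcost]
    by_cases hmiss : σ n ∈ C n
    · rw [if_neg (not_not.mpr hmiss)]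
      rw [insert_eq_of_mem hmiss] at hgrow
      exact ih.trans (by omega)
    · rw [if_pos hmiss, card_insert_of_notMem (by simp)]
      rw [card_insert_of_notMem hmiss] at hgrow
      exact Nat.succ_le_of_lt (ih.trans_lt (by omega))

lemma card_le_schedCost_add_of_subset_misses (hC : IsSchedule k n σ C) {s : Finset ℕ}
    (hs : s ⊆ misses n σ C) : #s ≤ schedCost n σ C + k :=
  (card_le_card hs).trans <| (card_misses_le hC).trans (by have := hC.2.1 n; omega)

end Schedules

lemma card_le_div_add_one_of_spaced {s : Finset ℕ} {a T d : ℕ} (hd : 0 < d)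
    (hs : s ⊆ Ico a (a + T)) (hspaced : ∀ x ∈ s, ∀ y ∈ s, x < y → x + d ≤ y) :
    #s ≤ T / d + 1 := by
  have hblock : ∀ x ∈ s, ∀ y ∈ s, x < y → (x - a) / d < (y - a) / d := fun x hx y hy hxy => by
    have hx' := mem_Ico.mp (hs hx)
    have : (x - a) / d + 1 ≤ (y - a) / d := by
      rw [← Nat.add_div_right _ hd]
      exact Nat.div_le_div_right (by have := hspaced x hx y hy hxy; omega)
    omega
  simpa using card_le_card_of_injOn (t := range (T / d + 1)) (fun x => (x - a) / d)
    (fun x hx => mem_range.mpr <| Nat.lt_succ_of_le <|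
      Nat.div_le_div_right (by have := mem_Ico.mp (hs hx); omega))
    (fun x hx y hy hxy => by
      rcases lt_trichotomy x y with hlt | heq | hlt
      · exact absurd hxy (hblock x hx y hy hlt).ne
      · exact heq
      · exact absurd hxy (hblock y hy x hx hlt).ne')

lemma exists_mod_eq_of_lt (a : ℕ) {p d : ℕ} (hp : p < d) :
    ∃ j, a < j ∧ j < a + 2 * d ∧ j % d = p := by
  have hd : 0 < d := by omega
  refine ⟨a / d * d + d + p, ?_, ?_, ?_⟩
  · have := Nat.lt_div_mul_add (a := a) hd
    omega
  · have := Nat.div_mul_le_self a d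
    omega
  · rw [show a / d * d + d + p = p + (a / d + 1) * d by ring, Nat.add_mul_mod_self_right,
      Nat.mod_eq_of_lt hp]

lemma l1Error_mono {m m' : ℕ} (h y : ℕ → ℕ) (hm : m ≤ m') : l1Error m h y ≤ l1Error m' h y :=
  sum_le_sum_of_subset (range_subset_range.mpr hm)

lemma exists_l1Error_eq (g y : ℕ → ℕ) {m E : ℕ} (hE : l1Error m g y ≤ E) :
    ∃ h, l1Error (m + 1) h y = E ∧ ∀ i < m, h i = g i := by
  refine ⟨Function.update g m (y m + (E - l1Error m g y)), ?_, fun i hi =>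
    Function.update_of_ne hi.ne _ _⟩
  have hprefix : l1Error m (Function.update g m (y m + (E - l1Error m g y))) y = l1Error m g y :=
    sum_congr rfl fun i hi => by rw [Function.update_of_ne (mem_range.mp hi).ne]
  rw [l1Error, sum_range_succ, ← l1Error, hprefix, Function.update_self]
  omega

noncomputable def nextArrival (n : ℕ) (σ : ℕ → ℕ) (t : ℕ) : ℕ :=
  sInf {t' | (t < t' ∧ t' < n ∧ σ t' = σ t) ∨ t' = n + 1}

section NextArrival

variable {n : ℕ} {σ : ℕ → ℕ} {t : ℕ}

lemma isLeast_nextArrival (n : ℕ) (σ : ℕ → ℕ) (t : ℕ) :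
    IsLeast {t' | (t < t' ∧ t' < n ∧ σ t' = σ t) ∨ t' = n + 1} (nextArrival n σ t) :=
  ⟨Nat.sInf_mem ⟨n + 1, Or.inr rfl⟩, fun _ hb => Nat.sInf_le hb⟩

lemma nextArrival_le_succ (n : ℕ) (σ : ℕ → ℕ) (t : ℕ) : nextArrival n σ t ≤ n + 1 :=
  (isLeast_nextArrival n σ t).2 (Or.inr rfl)

lemma nextArrival_le {s : ℕ} (hts : t < s) (hsn : s < n) (hσ : σ s = σ t) :
    nextArrival n σ t ≤ s :=
  (isLeast_nextArrival n σ t).2 (Or.inl ⟨hts, hsn, hσ⟩)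

lemma lt_nextArrival (ht : t < n) : t < nextArrival n σ t := by
  rcases (isLeast_nextArrival n σ t).1 with ⟨hlt, -⟩ | heq
  · exact hlt
  · omega

lemma nextArrival_eq_of_forall_ne (hnew : ∀ s, t < s → s < n → σ s ≠ σ t) :
    nextArrival n σ t = n + 1 := by
  rcases (isLeast_nextArrival n σ t).1 with ⟨hts, hsn, hσ⟩ | heq
  · exact absurd hσ (hnew _ hts hsn)
  · exact heq

end NextArrival

section OfflineSchedule

variable (k M : ℕ) (σ : ℕ → ℕ)

noncomputable def freePage (t : ℕ) : ℕ :=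
  sInf {p | p ≤ k ∧ ∀ s, t ≤ s → s < t + k → σ s ≠ p}

/-- The one page of `{0, …, k}` that the offline schedule keeps out of its cache. -/
noncomputable def hole : ℕ → ℕ
  | 0 => 0
  | t + 1 => if M ≤ t ∧ σ t = hole t then freePage k σ t else hole t

noncomputable def offlineCache (t : ℕ) : Finset ℕ :=
  if t ≤ M then (if t = 0 then ∅ else {σ (t - 1)})
  else ((Ico M t).image σ).erase (hole k M σ t)

variable {k M σ}

lemma freePage_spec (t : ℕ) :
    freePage k σ t ≤ k ∧ ∀ s, t ≤ s → s < t + k → σ s ≠ freePage k σ t := by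
  obtain ⟨p, hp, hpσ⟩ := exists_mem_notMem_of_card_lt_card (s := (Ico t (t + k)).image σ)
    (t := range (k + 1))
    (card_image_le.trans_lt (by rw [Nat.card_Ico, card_range]; omega))
  refine Nat.sInf_mem (s := {p | p ≤ k ∧ ∀ s, t ≤ s → s < t + k → σ s ≠ p})
    ⟨p, Nat.lt_succ_iff.mp (mem_range.mp hp), fun s hts hst hσs => hpσ ?_⟩
  exact mem_image.mpr ⟨s, mem_Ico.mpr ⟨hts, hst⟩, hσs⟩

lemma hole_le (t : ℕ) : hole k M σ t ≤ k := by
  induction t with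
  | zero => simp [hole]
  | succ t ih =>
    rw [hole]
    split
    · exact (freePage_spec t).1
    · exact ih

lemma hole_succ_of_ne {t : ℕ} (hmiss : σ t ≠ hole k M σ t) :
    hole k M σ (t + 1) = hole k M σ t := by
  rw [hole, if_neg fun h => hmiss h.2]

lemma hole_succ_ne (hk : 0 < k) {t : ℕ} (ht : M ≤ t) : σ t ≠ hole k M σ (t + 1) := by
  by_cases hhit : σ t = hole k M σ t
  · rw [hole, if_pos ⟨ht, hhit⟩]
    exact (freePage_spec t).2 t le_rfl (by omega)
  · rwa [hole_succ_of_ne hhit]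

lemma hole_add_eq_freePage {t : ℕ} (ht : M ≤ t) (hhit : σ t = hole k M σ t) :
    ∀ j, 1 ≤ j → j ≤ k → hole k M σ (t + j) = freePage k σ t
  | 0, hj, _ => absurd hj (by omega)
  | 1, _, _ => by rw [hole, if_pos ⟨ht, hhit⟩]
  | j + 2, _, hjk => by
    have ih := hole_add_eq_freePage ht hhit (j + 1) (by omega) (by omega)
    change hole k M σ (t + (j + 1) + 1) = _
    rw [hole_succ_of_ne (by rw [ih]; exact (freePage_spec t).2 _ (by omega) (by omega)), ih]

/-- After hitting the hole at `t`, the hole moves to a page that is not requested for `k` steps. -/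
lemma add_le_of_hits {t t' : ℕ} (ht : M ≤ t) (htt' : t < t') (hhit : σ t = hole k M σ t)
    (hhit' : σ t' = hole k M σ t') : t + k ≤ t' := by
  by_contra! hlt
  have hhole := hole_add_eq_freePage ht hhit (t' - t) (by omega) (by omega)
  rw [Nat.add_sub_cancel' htt'.le] at hhole
  exact (freePage_spec t).2 t' htt'.le hlt (hhit'.trans hhole)

/-- The times at which the offline schedule faults after the first `M` requests. -/
noncomputable def holeHits (k M : ℕ) (σ : ℕ → ℕ) (n : ℕ) : Finset ℕ :=
  (Ico M n).filter fun t => σ t = hole k M σ t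

lemma card_holeHits_le (hk : 0 < k) (T : ℕ) : #(holeHits k M σ (M + T)) ≤ T / k + 1 :=
  card_le_div_add_one_of_spaced hk (filter_subset _ _) fun _ hx _ hy hxy =>
    add_le_of_hits (mem_Ico.mp (mem_filter.mp hx).1).1 hxy (mem_filter.mp hx).2
      (mem_filter.mp hy).2

lemma offlineCache_of_le {t : ℕ} (ht : t ≤ M) :
    offlineCache k M σ t = if t = 0 then ∅ else {σ (t - 1)} :=
  if_pos ht

lemma mem_offlineCache_of_lt {t x : ℕ} (ht : M < t) :
    x ∈ offlineCache k M σ t ↔ x ≠ hole k M σ t ∧ ∃ s, M ≤ s ∧ s < t ∧ σ s = x := by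
  simp [offlineCache, if_neg ht.not_ge, and_assoc]

lemma offlineCache_sdiff_succ_subset {t : ℕ} (ht : M < t) :
    offlineCache k M σ t \ offlineCache k M σ (t + 1) ⊆ {hole k M σ (t + 1)} := by
  intro x hx
  obtain ⟨hxt, hxt'⟩ := mem_sdiff.mp hx
  obtain ⟨-, s, hMs, hst, rfl⟩ := (mem_offlineCache_of_lt ht).mp hxt
  rw [mem_offlineCache_of_lt (by omega)] at hxt'
  exact mem_singleton.mpr (by_contra fun hne => hxt' ⟨hne, s, hMs, by omega, rfl⟩)

lemma card_offlineCache_le (hk : 0 < k) (hσ : ∀ t, M ≤ t → σ t ≤ k) (t : ℕ) :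
    #(offlineCache k M σ t) ≤ k := by
  by_cases ht : t ≤ M
  · rw [offlineCache_of_le ht]
    split <;> simp only [card_empty, card_singleton] <;> omega
  · rw [offlineCache, if_neg ht]
    have hsub : (Ico M t).image σ ⊆ range (k + 1) := fun x hx => by
      obtain ⟨s, hs, rfl⟩ := mem_image.mp hx
      exact mem_range.mpr (Nat.lt_succ_of_le (hσ s (mem_Ico.mp hs).1))
    calc #(((Ico M t).image σ).erase (hole k M σ t))
        ≤ #((range (k + 1)).erase (hole k M σ t)) := card_le_card (erase_subset_erase _ hsub)
      _ = k := by rw [card_erase_of_mem (mem_range.mpr (Nat.lt_succ_of_le (hole_le t)))]; simp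

lemma offlineCache_succ_spec (hk : 0 < k) {t : ℕ} (ht : M ≤ t) :
    σ t ∈ offlineCache k M σ (t + 1) ∧
      offlineCache k M σ (t + 1) ⊆ insert (σ t) (offlineCache k M σ t) := by
  refine ⟨(mem_offlineCache_of_lt (by omega)).mpr ⟨hole_succ_ne hk ht, t, ht, by omega, rfl⟩,
    fun x hx => ?_⟩
  obtain ⟨hxhole, s, hMs, hst, rfl⟩ := (mem_offlineCache_of_lt (by omega)).mp hx
  rcases eq_or_ne (σ s) (σ t) with hsame | hdiff
  · exact hsame ▸ mem_insert_self _ _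
  have hst : s < t := lt_of_le_of_ne (Nat.lt_succ_iff.mp hst) (by rintro rfl; exact hdiff rfl)
  refine mem_insert_of_mem <|
    (mem_offlineCache_of_lt (t := t) (by omega)).mpr ⟨?_, s, hMs, hst, rfl⟩
  by_cases hhit : σ t = hole k M σ t
  · exact hhit ▸ hdiff
  · rwa [← hole_succ_of_ne hhit]

lemma isSchedule_offlineCache (hk : 0 < k) (hσ : ∀ t, M ≤ t → σ t ≤ k) (n : ℕ) :
    IsSchedule k n σ (offlineCache k M σ) := by
  refine ⟨by simp [offlineCache], card_offlineCache_le hk hσ, fun t _ => ?_⟩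
  rcases Nat.lt_or_ge t M with htM | hMt
  · rw [offlineCache_of_le (show t + 1 ≤ M by omega), if_neg t.succ_ne_zero, Nat.add_sub_cancel]
    exact ⟨mem_singleton_self _, singleton_subset_iff.mpr (mem_insert_self _ _)⟩
  · exact offlineCache_succ_spec hk hMt

lemma card_offlineCache_sdiff_succ_le {n t : ℕ} (htn : t < n) :
    #(offlineCache k M σ t \ offlineCache k M σ (t + 1)) ≤
      if t ∈ Icc 1 M ∪ holeHits k M σ n then 1 else 0 := by
  rcases Nat.eq_zero_or_pos t with rfl | ht0
  · simp [offlineCache]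
  by_cases htM : t ≤ M
  · rw [if_pos (mem_union_left _ (mem_Icc.mpr ⟨ht0, htM⟩))]
    refine (card_le_card sdiff_subset).trans ?_
    rw [offlineCache_of_le htM, if_neg ht0.ne', card_singleton]
  have hsub := offlineCache_sdiff_succ_subset (k := k) (σ := σ) (not_le.mp htM)
  by_cases hhit : σ t = hole k M σ t
  · have hmem : t ∈ holeHits k M σ n := mem_filter.mpr ⟨mem_Ico.mpr ⟨by omega, htn⟩, hhit⟩
    rw [if_pos (mem_union_right _ hmem)]
    exact (card_le_card hsub).trans (card_singleton _).le
  · refine (card_eq_zero.mpr (eq_empty_of_forall_notMem fun x hx => ?_)).trans_le (Nat.zero_le _)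
    have hx_hole := mem_singleton.mp (hsub hx)
    rw [hole_succ_of_ne hhit] at hx_hole
    exact ((mem_offlineCache_of_lt (not_le.mp htM)).mp (mem_sdiff.mp hx).1).1 hx_hole

lemma schedCost_offlineCache_le (hk : 0 < k) (T : ℕ) :
    schedCost (M + T) σ (offlineCache k M σ) ≤ M + (T / k + 1) :=
  calc schedCost (M + T) σ (offlineCache k M σ)
      ≤ ∑ t ∈ range (M + T), if t ∈ Icc 1 M ∪ holeHits k M σ (M + T) then 1 else 0 :=
        sum_le_sum fun t ht => card_offlineCache_sdiff_succ_le (mem_range.mp ht)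
    _ ≤ #(Icc 1 M ∪ holeHits k M σ (M + T)) := by
        rw [sum_boole, Nat.cast_id]
        exact card_le_card fun t ht => (mem_filter.mp ht).2
    _ ≤ M + (T / k + 1) := (card_union_le _ _).trans (by
        have := card_holeHits_le (M := M) (σ := σ) hk T
        simp only [Nat.card_Icc, Nat.add_sub_cancel]
        omega)

end OfflineSchedule

lemma optCost_le_of_pages_le {k M : ℕ} {σ : ℕ → ℕ} (hk : 0 < k) (hσ : ∀ t, M ≤ t → σ t ≤ k)
    (T : ℕ) : optCost k (M + T) σ ≤ M + (T / k + 1) :=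
  (optCost_le_schedCost (isSchedule_offlineCache hk hσ _)).trans (schedCost_offlineCache_le hk T)

/-- The histories produced when each request is chosen by `f` from the history so far and
the predictions are `g`. -/
def playHist (f : ℕ → List (ℕ × ℕ) → ℕ) (g : ℕ → ℕ) : ℕ → List (ℕ × ℕ)
  | 0 => []
  | t + 1 => (f t (playHist f g t), g t) :: playHist f g t

def playSeq (f : ℕ → List (ℕ × ℕ) → ℕ) (g : ℕ → ℕ) (t : ℕ) : ℕ :=
  f t (playHist f g t)

lemma hist_playSeq (f : ℕ → List (ℕ × ℕ) → ℕ) (g : ℕ → ℕ) (t : ℕ) :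
    hist (playSeq f g) g t = playHist f g t := by
  induction t with
  | zero => simp [hist, playHist]
  | succ t ih => rw [hist_succ, ih, playHist, playSeq]

section Adversary

variable {k M n : ℕ} {Alg : List (ℕ × ℕ) → Finset ℕ}

noncomputable def dodge (k : ℕ) (Alg : List (ℕ × ℕ) → Finset ℕ) (l : List (ℕ × ℕ)) : ℕ :=
  sInf {p | p ≤ k ∧ p ∉ Alg l}

lemma dodge_spec (hAlg : DetAlgorithm k Alg) (l : List (ℕ × ℕ)) :
    dodge k Alg l ≤ k ∧ dodge k Alg l ∉ Alg l := by
  obtain ⟨p, hp, hpAlg⟩ := exists_mem_notMem_of_card_lt_card (s := Alg l) (t := range (k + 1))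
    (by have := hAlg.2.1 l; rw [card_range]; omega)
  exact Nat.sInf_mem (s := {p | p ≤ k ∧ p ∉ Alg l})
    ⟨p, Nat.lt_succ_iff.mp (mem_range.mp hp), hpAlg⟩

noncomputable def advRequest (k M : ℕ) (Alg : List (ℕ × ℕ) → Finset ℕ) (t : ℕ)
    (l : List (ℕ × ℕ)) : ℕ :=
  if t < M then t + k + 1
  else if (t - M) % 3 = 0 then (t - M) / 3 % (k + 1)
  else dodge k Alg l

/-- Exact during the first `M` requests, whose pages never recur. -/
def advPrediction (M n t : ℕ) : ℕ :=
  if t < M then n + 1 else t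

noncomputable def adversary (k M n : ℕ) (Alg : List (ℕ × ℕ) → Finset ℕ) : ℕ → ℕ :=
  playSeq (advRequest k M Alg) (advPrediction M n)

lemma adversary_of_lt {t : ℕ} (ht : t < M) : adversary k M n Alg t = t + k + 1 := by
  simp [adversary, playSeq, advRequest, ht]

lemma adversary_sweep (j : ℕ) : adversary k M n Alg (M + 3 * j) = j % (k + 1) := by
  simp [adversary, playSeq, advRequest]

lemma adversary_of_dodge {t : ℕ} (ht : M ≤ t) (h3 : (t - M) % 3 ≠ 0) :
    adversary k M n Alg t = dodge k Alg (playHist (advRequest k M Alg) (advPrediction M n) t) := by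
  simp [adversary, playSeq, advRequest, not_lt.mpr ht, h3]

lemma adversary_le (hAlg : DetAlgorithm k Alg) {t : ℕ} (ht : M ≤ t) :
    adversary k M n Alg t ≤ k := by
  by_cases h3 : (t - M) % 3 = 0
  · obtain ⟨j, rfl⟩ : ∃ j, t = M + 3 * j := ⟨(t - M) / 3, by omega⟩
    rw [adversary_sweep]
    exact Nat.lt_succ_iff.mp (Nat.mod_lt _ k.succ_pos)
  · rw [adversary_of_dodge ht h3]
    exact (dodge_spec hAlg _).1

/-- Only predictions before `t` influence the algorithm's cache at time `t`. -/
lemma adversary_notMem_alg (hAlg : DetAlgorithm k Alg) {h : ℕ → ℕ} {t : ℕ}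
    (hh : ∀ i < t, h i = advPrediction M n i) (ht : M ≤ t) (h3 : (t - M) % 3 ≠ 0) :
    adversary k M n Alg t ∉ Alg (hist (adversary k M n Alg) h t) := by
  rw [hist_congr hh, adversary, hist_playSeq, ← adversary, adversary_of_dodge ht h3]
  exact (dodge_spec hAlg _).2

lemma adversary_notMem_of_lt {n' : ℕ} {C : ℕ → Finset ℕ}
    (hC : IsSchedule k n' (adversary k M n Alg) C) {t : ℕ} (htM : t < M) (htn : t ≤ n') :
    adversary k M n Alg t ∉ C t :=
  IsSchedule.notMem_of_first hC htn fun s hst => by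
    rw [adversary_of_lt htM, adversary_of_lt (hst.trans htM)]
    omega

lemma le_optCost_adversary_add (hAlg : DetAlgorithm k Alg) (T : ℕ) :
    M ≤ optCost k (M + T) (adversary k M (M + T) Alg) + k := by
  obtain ⟨C, hC, hcost⟩ := exists_schedCost_eq_optCost
    (DetAlgorithm.isSchedule hAlg (σ := adversary k M (M + T) Alg) (n := M + T) (fun _ => 0))
  have hcalm : range M ⊆ misses (M + T) (adversary k M (M + T) Alg) C := fun t ht =>
    mem_filter.mpr ⟨mem_range.mpr (by have := mem_range.mp ht; omega),
      adversary_notMem_of_lt hC (mem_range.mp ht) (by have := mem_range.mp ht; omega)⟩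
  simpa [hcost] using card_le_schedCost_add_of_subset_misses hC hcalm

lemma le_algCost_adversary_add (hAlg : DetAlgorithm k Alg) {T : ℕ} {h : ℕ → ℕ}
    (hh : ∀ i < M + T - 1, h i = advPrediction M (M + T) i) :
    M + T ≤ algCost Alg (adversary k M (M + T) Alg) h (M + T) + k + (T / 3 + 1) := by
  set sweeps := (Ico M (M + T)).filter fun t => (t - M) % 3 = 0
  have hsweeps : #sweeps ≤ T / 3 + 1 :=
    card_le_div_add_one_of_spaced (by norm_num) (filter_subset _ _) fun x hx y hy hxy => by
      have hx := mem_filter.mp hx; have hy := mem_filter.mp hy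
      have := mem_Ico.mp hx.1; have := mem_Ico.mp hy.1
      omega
  have hC := DetAlgorithm.isSchedule hAlg (σ := adversary k M (M + T) Alg) (n := M + T) h
  have hmiss : range (M + T) \ sweeps ⊆ misses (M + T) (adversary k M (M + T) Alg)
      (fun t => Alg (hist (adversary k M (M + T) Alg) h t)) := fun t ht => by
    obtain ⟨htn, htsweep⟩ := mem_sdiff.mp ht
    have htn := mem_range.mp htn
    refine mem_filter.mpr ⟨mem_range.mpr htn, ?_⟩
    rcases Nat.lt_or_ge t M with htM | hMt
    · exact adversary_notMem_of_lt hC htM htn.le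
    · exact adversary_notMem_alg hAlg (fun i hi => hh i (by omega)) hMt
        fun h3 => htsweep (mem_filter.mpr ⟨mem_Ico.mpr ⟨hMt, htn⟩, h3⟩)
  have := (le_card_sdiff sweeps (range (M + T))).trans
    ((card_le_card hmiss).trans (card_le_schedCost_add_of_subset_misses hC subset_rfl))
  rw [card_range] at this
  change M + T - #sweeps ≤ algCost Alg _ h _ + k at this
  omega

lemma optCost_adversary_le (hAlg : DetAlgorithm k Alg) (hk : 0 < k) (T : ℕ) :
    optCost k (M + T) (adversary k M (M + T) Alg) ≤ M + (T / k + 1) :=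
  optCost_le_of_pages_le hk (fun _ ht => adversary_le hAlg ht) T

lemma nextArrival_adversary_of_lt (hAlg : DetAlgorithm k Alg) {t : ℕ} (ht : t < M) :
    nextArrival n (adversary k M n Alg) t = n + 1 :=
  nextArrival_eq_of_forall_ne fun s hts _ => by
    rw [adversary_of_lt ht]
    rcases Nat.lt_or_ge s M with hsM | hMs
    · rw [adversary_of_lt hsM]; omega
    · have := adversary_le (n := n) hAlg hMs; omega

/-- The sweeps bring every page of `{0, …, k}` back within `6 k + 3` steps. -/
lemma nextArrival_adversary_le (hAlg : DetAlgorithm k Alg) {t : ℕ} (hMt : M ≤ t) :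
    nextArrival n (adversary k M n Alg) t ≤ t + (6 * k + 4) := by
  obtain ⟨j, hjlo, hjhi, hjmod⟩ := exists_mod_eq_of_lt ((t - M) / 3)
    (Nat.lt_succ_of_le (adversary_le (n := n) hAlg hMt))
  have hsweep : adversary k M n Alg (M + 3 * j) = adversary k M n Alg t := by
    rw [adversary_sweep, hjmod]
  rcases Nat.lt_or_ge (M + 3 * j) n with hsn | hns
  · exact (nextArrival_le (by omega) hsn hsweep).trans (by omega)
  · exact (nextArrival_le_succ _ _ _).trans (by omega)

lemma l1Error_advPrediction_le (hAlg : DetAlgorithm k Alg) (T : ℕ) :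
    l1Error (M + T) (advPrediction M (M + T)) (nextArrival (M + T) (adversary k M (M + T) Alg))
      ≤ (6 * k + 4) * T := by
  rw [l1Error, sum_range_add]
  have hcalm : ∀ t ∈ range M, ((advPrediction M (M + T) t : ℤ) -
      nextArrival (M + T) (adversary k M (M + T) Alg) t).natAbs = 0 := fun t ht => by
    rw [advPrediction, if_pos (mem_range.mp ht), nextArrival_adversary_of_lt hAlg (mem_range.mp ht)]
    simp
  rw [sum_eq_zero hcalm, zero_add, mul_comm]
  refine (sum_le_card_nsmul _ _ (6 * k + 4) fun t ht => ?_).trans (by simp)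
  have hpos := lt_nextArrival (σ := adversary k M (M + T) Alg) (show M + t < M + T by
    have := mem_range.mp ht; omega)
  have hle := nextArrival_adversary_le (n := M + T) hAlg (show M ≤ M + t by omega)
  rw [advPrediction, if_neg (by omega)]
  omega

end Adversary

lemma exists_predictions_adversary {k M : ℕ} {Alg : List (ℕ × ℕ) → Finset ℕ}
    (hAlg : DetAlgorithm k Alg) (hM : 0 < M) {T E : ℕ} (hE : (6 * k + 4) * T ≤ E) :
    ∃ h, l1Error (M + T) h (nextArrival (M + T) (adversary k M (M + T) Alg)) = E ∧
      M + T ≤ algCost Alg (adversary k M (M + T) Alg) h (M + T) + k + (T / 3 + 1) := by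
  obtain ⟨m, hm⟩ : ∃ m, M + T = m + 1 := ⟨M + T - 1, by omega⟩
  obtain ⟨h, herr, hagree⟩ := exists_l1Error_eq (advPrediction M (M + T))
    (nextArrival (M + T) (adversary k M (M + T) Alg)) (m := m) <|
    (l1Error_mono _ _ (by omega)).trans ((l1Error_advPrediction_le hAlg T).trans hE)
  refine ⟨h, hm ▸ herr, le_algCost_adversary_add hAlg fun i hi => hagree i (by omega)⟩

lemma abs_natCeil_mul_div_sub_lt {r x δ : ℝ} (hr : 0 ≤ r) (hδ : 0 < δ) (hx : δ⁻¹ < x) :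
    |(⌈r * x⌉₊ : ℝ) / x - r| < δ := by
  have hx0 : 0 < x := (inv_pos.mpr hδ).trans hx
  have hlo : r ≤ ⌈r * x⌉₊ / x := by rw [le_div_iff₀ hx0]; exact Nat.le_ceil _
  have hhi : ⌈r * x⌉₊ / x < r + δ := by
    rw [div_lt_iff₀ hx0]
    have := Nat.ceil_lt_add_one (mul_nonneg hr hx0.le)
    have := (inv_lt_iff_one_lt_mul₀' hδ).mp hx
    linarith
  rw [abs_lt]
  constructor <;> linarith

lemma mul_natCeil_div_bounds {x r : ℝ} (hr : 0 < r) (hx : 0 ≤ x) :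
    x ≤ r * ⌈x / r⌉₊ ∧ r * ⌈x / r⌉₊ < x + r := by
  constructor
  · rw [← div_le_iff₀' hr]; exact Nat.le_ceil _
  · rw [← lt_div_iff₀' hr, add_div, div_self hr.ne']
    exact Nat.ceil_lt_add_one (div_nonneg hx hr.le)

lemma error_le_natCeil_budget {k T c O : ℕ} {r : ℝ} (hk : 2 ≤ k) (hr : 0 < r)
    (hc : 8 * (T : ℝ) ≤ r * c) (hcO : c ≤ O) : (6 * k + 4) * T ≤ ⌈r * ((k : ℝ) * O)⌉₊ := by
  have hkR : (2 : ℝ) ≤ k := by exact_mod_cast hk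
  have hrc : r * c ≤ r * O := mul_le_mul_of_nonneg_left (by exact_mod_cast hcO) hr.le
  refine Nat.cast_le.mp (le_trans ?_ (Nat.le_ceil _))
  push_cast
  nlinarith [(Nat.cast_nonneg T : (0 : ℝ) ≤ T)]

/-- The gap `A - O` is at least about `T / 6` for `T = k L`, while `E / k ≈ r O ≤ 9 T + O(k²)`. -/
lemma add_mul_div_le_of_bounds {k L c O A E : ℕ} {r : ℝ} (hk : 2 ≤ k) (hr : 0 < r)
    (hrk : r ≤ k) (hL : 12 * (k + 2) ≤ L) (hc : r * c < 8 * (k * L) + r)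
    (hO : O ≤ k + c + (L + 1)) (hA : k + c + k * L ≤ A + k + (k * L / 3 + 1))
    (hE : (E : ℝ) < r * (k * O) + 1) : (O : ℝ) + 1 / 108 * E / k ≤ A := by
  have hkR : (2 : ℝ) ≤ k := by exact_mod_cast hk
  have hLR : 12 * ((k : ℝ) + 2) ≤ L := by exact_mod_cast hL
  have hOR : (O : ℝ) ≤ k + c + (L + 1) := by exact_mod_cast hO
  have hAR : (k : ℝ) + c + k * L ≤ A + k + (k * L / 3 + 1) := by
    have hdiv : (((k * L / 3 : ℕ)) : ℝ) ≤ (k * L : ℕ) / 3 := Nat.cast_div_le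
    have : ((k + c + k * L : ℕ) : ℝ) ≤ ((A + k + (k * L / 3 + 1) : ℕ) : ℝ) := by exact_mod_cast hA
    push_cast at this hdiv
    linarith
  have hL0 : (0 : ℝ) ≤ L := by linarith
  have hrO : r * O ≤ k * k + 9 * (k * L) + 2 * k := by
    have h1 : r * O ≤ r * (k + c + (L + 1)) := mul_le_mul_of_nonneg_left hOR hr.le
    have h2 : r * L ≤ k * L := mul_le_mul_of_nonneg_right hrk hL0
    nlinarith
  have hEk : E / (k : ℝ) ≤ r * O + 1 := by
    rw [div_le_iff₀ (by linarith)]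
    nlinarith
  have hkL : 2 * (L : ℝ) ≤ k * L := mul_le_mul_of_nonneg_right hkR hL0
  have hkL' : 12 * (k : ℝ) * (k + 2) ≤ k * L := by nlinarith
  rw [mul_div_assoc]
  nlinarith

lemma exists_hard_instance_of_pos {k : ℕ} (hk : 2 ≤ k) {Alg : List (ℕ × ℕ) → Finset ℕ}
    (hAlg : DetAlgorithm k Alg) {r δ : ℝ} (hr : 0 < r) (hrk : r ≤ k) (hδ : 0 < δ) (N : ℕ) :
    ∃ (n : ℕ) (σ h y : ℕ → ℕ),
      (∀ t < n, IsLeast {t' | (t < t' ∧ t' < n ∧ σ t' = σ t) ∨ t' = n + 1} (y t)) ∧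
      N ≤ optCost k n σ ∧ 0 < optCost k n σ ∧
      |(l1Error n h y : ℝ) / ((k : ℝ) * optCost k n σ) - r| < δ ∧
      (optCost k n σ : ℝ) + 1 / 108 * (l1Error n h y : ℝ) / k ≤ algCost Alg σ h n := by
  -- `k + c` fresh pages with `c ≈ 8 k L / r`, then `k L` adversarial requests; `OPT ≥ c ≥ L`.
  obtain ⟨L, hL⟩ : ∃ L, L = 12 * (k + 2) + N + ⌈δ⁻¹⌉₊ := ⟨_, rfl⟩
  obtain ⟨hc_lo, hc_hi⟩ :=
    mul_natCeil_div_bounds hr (by positivity : 0 ≤ 8 * ((k * L : ℕ) : ℝ))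
  generalize ⌈8 * ((k * L : ℕ) : ℝ) / r⌉₊ = c at hc_lo hc_hi
  have hOlo := le_optCost_adversary_add (M := k + c) hAlg (k * L)
  have hOhi := optCost_adversary_le (M := k + c) hAlg (show 0 < k by omega) (k * L)
  rw [Nat.mul_div_cancel_left L (show 0 < k by omega)] at hOhi
  set σ := adversary k (k + c) (k + c + k * L) Alg
  set O := optCost k (k + c + k * L) σ
  have hLc : L ≤ c := by
    have : ((k * (8 * L) : ℕ) : ℝ) ≤ (k * c : ℕ) := by
      push_cast at hc_lo ⊢
      nlinarith [(Nat.cast_nonneg c : (0 : ℝ) ≤ c)]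
    have := Nat.le_of_mul_le_mul_left (Nat.cast_le.mp this) (by omega : 0 < k)
    omega
  have hOδ : δ⁻¹ < (k : ℝ) * O := by
    have h1 : δ⁻¹ < L := (Nat.le_ceil _).trans_lt (by exact_mod_cast (by omega : ⌈δ⁻¹⌉₊ < L))
    have h2 : (L : ℝ) ≤ O := by exact_mod_cast (show L ≤ O by omega)
    have hkR : (1 : ℝ) ≤ k := by exact_mod_cast (by omega : 1 ≤ k)
    nlinarith
  obtain ⟨h, herr, halg⟩ := exists_predictions_adversary hAlg (show 0 < k + c by omega)
    (error_le_natCeil_budget hk hr hc_lo (show c ≤ O by omega))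
  refine ⟨k + c + k * L, σ, h, nextArrival _ σ, fun t _ => isLeast_nextArrival _ _ t, by omega,
    by omega, by rw [herr]; exact abs_natCeil_mul_div_sub_lt hr.le hδ hOδ, ?_⟩
  rw [herr]
  exact add_mul_div_le_of_bounds hk hr hrk (by omega) (by push_cast at hc_hi; linarith) hOhi
    halg (Nat.ceil_lt_add_one (by positivity))

lemma exists_hard_instance_of_zero {k : ℕ} {Alg : List (ℕ × ℕ) → Finset ℕ}
    (hAlg : DetAlgorithm k Alg) {δ : ℝ} (hδ : 0 < δ) (N : ℕ) :
    ∃ (n : ℕ) (σ h y : ℕ → ℕ),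
      (∀ t < n, IsLeast {t' | (t < t' ∧ t' < n ∧ σ t' = σ t) ∨ t' = n + 1} (y t)) ∧
      N ≤ optCost k n σ ∧ 0 < optCost k n σ ∧
      |(l1Error n h y : ℝ) / ((k : ℝ) * optCost k n σ) - 0| < δ ∧
      (optCost k n σ : ℝ) + 1 / 108 * (l1Error n h y : ℝ) / k ≤ algCost Alg σ h n := by
  set M := N + k + 1
  have hOlo : M ≤ optCost k (M + 0) (adversary k M (M + 0) Alg) + k :=
    le_optCost_adversary_add hAlg 0
  obtain ⟨h, herr, -⟩ := exists_predictions_adversary hAlg (show 0 < M by omega) (T := 0)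
    (E := 0) le_rfl
  refine ⟨M + 0, adversary k M (M + 0) Alg, h, nextArrival (M + 0) (adversary k M (M + 0) Alg),
    fun t _ => isLeast_nextArrival _ _ t, by omega, by omega, ?_, ?_⟩
  · rwa [herr, Nat.cast_zero, zero_div, sub_zero, abs_zero]
  · rw [herr, Nat.cast_zero, mul_zero, zero_div, add_zero]
    exact_mod_cast optCost_le_algCost hAlg h

end Caching

/-- Every deterministic learning-augmented caching algorithm has
competitive ratio at least 1 + Ω(min((1/k)·(η/OPT), k)): there is a universal
constant C > 0 such that for every deterministic algorithm A, every k ≥ 2,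
every target ratio r ∈ [0, k], every tolerance δ > 0 and every bound N, there
is an input (σ, h) with η/(k·OPT) within δ of r and OPT ≥ N on which
ALG_A ≥ OPT + C·η/k. -/
theorem deterministic_lower_bound :
    ∃ C : ℝ, C > 0 ∧
      ∀ (k : ℕ), 2 ≤ k →
      ∀ (Alg : List (ℕ × ℕ) → Finset ℕ), DetAlgorithm k Alg →
      ∀ r : ℝ, 0 ≤ r → r ≤ (k : ℝ) →
      ∀ δ : ℝ, 0 < δ →
      ∀ N : ℕ,
      ∃ (n : ℕ) (σ h y : ℕ → ℕ),
        (∀ t < n,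
          IsLeast {t' | (t < t' ∧ t' < n ∧ σ t' = σ t) ∨ t' = n + 1} (y t)) ∧
        N ≤ optCost k n σ ∧ 0 < optCost k n σ ∧
        |(l1Error n h y : ℝ) / ((k : ℝ) * optCost k n σ) - r| < δ ∧
        (optCost k n σ : ℝ) + C * (l1Error n h y : ℝ) / k ≤ algCost Alg σ h n := by
  refine ⟨1 / 108, by norm_num, fun k hk Alg hAlg r hr0 hrk δ hδ N => ?_⟩
  rcases hr0.eq_or_lt with rfl | hr
  · exact Caching.exists_hard_instance_of_zero hAlg hδ N
  · exact Caching.exists_hard_instance_of_pos hk hAlg hr hrk hδ N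
end
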